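/- (Uniform continuity of a family of Lip-norms implies convergence of the associated metrics.) Let X be a nonempty type, F a nonempty set of functions X → ℝ closed under scalar multiplication, and for each θ ∈ [0,1] let L_θ : (X → ℝ) → ℝ be nonnegative and absolutely homogeneous on F. Assume: (a) for every f ∈ F, L₀(f) = 0 implies f is a constant function; (b) for all x, y ∈ X the set { |f(x) - f(y)| : f ∈ F, L₀(f) ≤ 1 } is bounded above; (c) (uniform continuity) for every ε > 0 there is δ > 0 such that for all θ with 0 < θ < δ and all f ∈ F with L₀(f) = 1 one has |L_θ(f) - L₀(f)| < ε. Then for every ε with 0 < ε < 1 there exists δ > 0 such that for all θ with 0 < θ < δ and all x, y ∈ X one has (1-ε)·ρ_{L_θ}(x,y) ≤ ρ_{L₀}(x,y) ≤ (1+ε)·ρ_{L_θ}(x,y). -/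

import Mathlib

/-!
By homogeneity, closeness of `L θ` to `L 0` on the `L 0`-unit sphere gives
`(1 - ε) L₀ f ≤ L_θ f ≤ (1 + ε) L₀ f` for every `f` separating `x` and `y`; the other test
functions contribute `0` to the suprema. A comparison `a * L f ≤ L' f` of Lip-norms yields
`a * ρ_{L'} ≤ ρ_L` by rescaling each test function by `a`.
-/

/-- The metric on points associated to a Lip-norm `L` on a set `F` of functions:
`ρ_L(x,y) = sSup { |f x - f y| : f ∈ F, L f ≤ 1 }`. -/
noncomputable def lipNormMetric {X : Type*} (F : Set (X → ℝ)) (L : (X → ℝ) → ℝ)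
    (x y : X) : ℝ :=
  sSup {r : ℝ | ∃ f ∈ F, L f ≤ 1 ∧ r = |f x - f y|}

open Set

def AbsHomogeneousOn {X : Type*} (F : Set (X → ℝ)) (L : (X → ℝ) → ℝ) : Prop :=
  ∀ f ∈ F, ∀ c : ℝ, L (c • f) = |c| * L f

section

variable {X : Type*} {F : Set (X → ℝ)}

lemma lipNormMetric_nonneg (L : (X → ℝ) → ℝ) (x y : X) :
    0 ≤ lipNormMetric F L x y :=
  Real.sSup_nonneg (by rintro _ ⟨f, -, -, rfl⟩; exact abs_nonneg _)

variable {L L' : (X → ℝ) → ℝ} {x y : X}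

lemma mul_abs_sub_le_lipNormMetric
    (hFsmul : ∀ f ∈ F, ∀ c : ℝ, c • f ∈ F) (hL : AbsHomogeneousOn F L)
    {a : ℝ} (ha : 0 < a) (hbdd : BddAbove {r : ℝ | ∃ f ∈ F, L f ≤ 1 ∧ r = |f x - f y|})
    (hLL' : ∀ f ∈ F, f x ≠ f y → a * L f ≤ L' f)
    {f : X → ℝ} (hf : f ∈ F) (hL'f : L' f ≤ 1) :
    a * |f x - f y| ≤ lipNormMetric F L x y := by
  by_cases hxy : f x = f y
  · simpa [hxy] using lipNormMetric_nonneg L x y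
  have hLaf : L (a • f) ≤ 1 := by
    rw [hL f hf, abs_of_pos ha]
    exact (hLL' f hf hxy).trans hL'f
  calc a * |f x - f y| = |(a • f) x - (a • f) y| := by
        simp only [Pi.smul_apply, smul_eq_mul, ← mul_sub, abs_mul, abs_of_pos ha]
    _ ≤ lipNormMetric F L x y := le_csSup hbdd ⟨a • f, hFsmul f hf a, hLaf, rfl⟩

lemma bddAbove_of_mul_le
    (hFsmul : ∀ f ∈ F, ∀ c : ℝ, c • f ∈ F) (hL : AbsHomogeneousOn F L)
    {a : ℝ} (ha : 0 < a) (hbdd : BddAbove {r : ℝ | ∃ f ∈ F, L f ≤ 1 ∧ r = |f x - f y|})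
    (hLL' : ∀ f ∈ F, f x ≠ f y → a * L f ≤ L' f) :
    BddAbove {r : ℝ | ∃ f ∈ F, L' f ≤ 1 ∧ r = |f x - f y|} := by
  refine ⟨lipNormMetric F L x y / a, ?_⟩
  rintro _ ⟨f, hf, hL'f, rfl⟩
  rw [le_div_iff₀' ha]
  exact mul_abs_sub_le_lipNormMetric hFsmul hL ha hbdd hLL' hf hL'f

lemma mul_lipNormMetric_le
    (hFsmul : ∀ f ∈ F, ∀ c : ℝ, c • f ∈ F) (hL : AbsHomogeneousOn F L)
    {a : ℝ} (ha : 0 < a) (hbdd : BddAbove {r : ℝ | ∃ f ∈ F, L f ≤ 1 ∧ r = |f x - f y|})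
    (hLL' : ∀ f ∈ F, f x ≠ f y → a * L f ≤ L' f) :
    a * lipNormMetric F L' x y ≤ lipNormMetric F L x y := by
  rw [← le_div_iff₀' ha]
  refine Real.sSup_le ?_ (div_nonneg (lipNormMetric_nonneg L x y) ha.le)
  rintro _ ⟨f, hf, hL'f, rfl⟩
  rw [le_div_iff₀' ha]
  exact mul_abs_sub_le_lipNormMetric hFsmul hL ha hbdd hLL' hf hL'f

lemma abs_sub_lt_mul_of_forall_eq_one {L₀ L : (X → ℝ) → ℝ}
    (hFsmul : ∀ f ∈ F, ∀ c : ℝ, c • f ∈ F) (hL₀ : AbsHomogeneousOn F L₀)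
    (hL : AbsHomogeneousOn F L) {ε : ℝ} (hε : ∀ g ∈ F, L₀ g = 1 → |L g - L₀ g| < ε)
    {f : X → ℝ} (hf : f ∈ F) (hpos : 0 < L₀ f) : |L f - L₀ f| < ε * L₀ f := by
  have hL₀g : L₀ ((L₀ f)⁻¹ • f) = 1 := by
    rw [hL₀ f hf, abs_of_pos (inv_pos.2 hpos), inv_mul_cancel₀ hpos.ne']
  have hclose := hε _ (hFsmul f hf _) hL₀g
  rw [hL₀g, hL f hf, abs_of_pos (inv_pos.2 hpos)] at hclose
  calc |L f - L₀ f| = L₀ f * |(L₀ f)⁻¹ * L f - 1| := by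
        rw [← abs_of_pos hpos, ← abs_mul, abs_of_pos hpos, mul_sub, mul_inv_cancel_left₀ hpos.ne',
          mul_one]
    _ < ε * L₀ f := by rw [mul_comm ε]; exact mul_lt_mul_of_pos_left hclose hpos

end

theorem uniform_continuity_of_lipnorms_implies_convergence_of_metrics_general
    {X : Type*} (F : Set (X → ℝ))
    (hFsmul : ∀ f ∈ F, ∀ c : ℝ, c • f ∈ F)
    (L : ℝ → (X → ℝ) → ℝ)
    (hnn : ∀ θ ∈ Set.Icc (0 : ℝ) 1, ∀ f ∈ F, 0 ≤ L θ f)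
    (hhom : ∀ θ ∈ Set.Icc (0 : ℝ) 1, ∀ f ∈ F, ∀ c : ℝ, L θ (c • f) = |c| * L θ f)
    (hconst : ∀ f ∈ F, L 0 f = 0 → ∃ r : ℝ, f = fun _ => r)
    (hbdd : ∀ x y : X, BddAbove {r : ℝ | ∃ f ∈ F, L 0 f ≤ 1 ∧ r = |f x - f y|})
    (hunif : ∀ ε : ℝ, 0 < ε → ∃ δ : ℝ, 0 < δ ∧
      ∀ θ : ℝ, 0 < θ → θ < δ → ∀ f ∈ F, L 0 f = 1 → |L θ f - L 0 f| < ε) :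
    ∀ ε : ℝ, 0 < ε → ε < 1 → ∃ δ : ℝ, 0 < δ ∧
      ∀ θ : ℝ, 0 < θ → θ < δ → ∀ x y : X,
        (1 - ε) * lipNormMetric F (L θ) x y ≤ lipNormMetric F (L 0) x y ∧
          lipNormMetric F (L 0) x y ≤ (1 + ε) * lipNormMetric F (L θ) x y := by
  intro ε hε hε1
  obtain ⟨δ, hδ, hunifδ⟩ := hunif ε hε
  refine ⟨min δ 1, lt_min hδ one_pos, fun θ hθ hθδ x y => ?_⟩
  have h0I : (0 : ℝ) ∈ Icc (0 : ℝ) 1 := left_mem_Icc.2 zero_le_one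
  have hθI : θ ∈ Icc (0 : ℝ) 1 := ⟨hθ.le, (hθδ.trans_le (min_le_right _ _)).le⟩
  have hpos : ∀ f ∈ F, f x ≠ f y → 0 < L 0 f := fun f hf hxy =>
    (hnn 0 h0I f hf).lt_of_ne fun h => hxy (by obtain ⟨r, rfl⟩ := hconst f hf h.symm; rfl)
  have hclose : ∀ f ∈ F, f x ≠ f y → |L θ f - L 0 f| < ε * L 0 f := fun f hf hxy =>
    abs_sub_lt_mul_of_forall_eq_one hFsmul (hhom 0 h0I) (hhom θ hθI)
      (hunifδ θ hθ (hθδ.trans_le (min_le_left _ _))) hf (hpos f hf hxy)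
  have hlower : ∀ f ∈ F, f x ≠ f y → (1 - ε) * L 0 f ≤ L θ f := fun f hf hxy => by
    linarith [(abs_lt.1 (hclose f hf hxy)).1]
  have hupper : ∀ f ∈ F, f x ≠ f y → (1 + ε)⁻¹ * L θ f ≤ L 0 f := fun f hf hxy => by
    rw [inv_mul_le_iff₀ (by positivity)]
    linarith [(abs_lt.1 (hclose f hf hxy)).2]
  have h1ε : 0 < 1 - ε := sub_pos.2 hε1
  refine ⟨mul_lipNormMetric_le hFsmul (hhom 0 h0I) h1ε (hbdd x y) hlower, ?_⟩
  have hbddθ := bddAbove_of_mul_le hFsmul (hhom 0 h0I) h1ε (hbdd x y) hlower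
  exact (inv_mul_le_iff₀ (by positivity)).1
    (mul_lipNormMetric_le hFsmul (hhom θ hθI) (by positivity) hbddθ hupper)

theorem uniform_continuity_of_lipnorms_implies_convergence_of_metrics
    {X : Type*} [Nonempty X] (F : Set (X → ℝ)) (hFne : F.Nonempty)
    (hFsmul : ∀ f ∈ F, ∀ c : ℝ, c • f ∈ F)
    (L : ℝ → (X → ℝ) → ℝ)
    (hnn : ∀ θ ∈ Set.Icc (0 : ℝ) 1, ∀ f ∈ F, 0 ≤ L θ f)
    (hhom : ∀ θ ∈ Set.Icc (0 : ℝ) 1, ∀ f ∈ F, ∀ c : ℝ, L θ (c • f) = |c| * L θ f)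
    (hconst : ∀ f ∈ F, L 0 f = 0 → ∃ r : ℝ, f = fun _ => r)
    (hbdd : ∀ x y : X, BddAbove {r : ℝ | ∃ f ∈ F, L 0 f ≤ 1 ∧ r = |f x - f y|})
    (hunif : ∀ ε : ℝ, 0 < ε → ∃ δ : ℝ, 0 < δ ∧
      ∀ θ : ℝ, 0 < θ → θ < δ → ∀ f ∈ F, L 0 f = 1 → |L θ f - L 0 f| < ε) :
    ∀ ε : ℝ, 0 < ε → ε < 1 → ∃ δ : ℝ, 0 < δ ∧
      ∀ θ : ℝ, 0 < θ → θ < δ → ∀ x y : X,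
        (1 - ε) * lipNormMetric F (L θ) x y ≤ lipNormMetric F (L 0) x y ∧
          lipNormMetric F (L 0) x y ≤ (1 + ε) * lipNormMetric F (L θ) x y :=
  uniform_continuity_of_lipnorms_implies_convergence_of_metrics_general F hFsmul L hnn hhom hconst
    hbdd hunif
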